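/- Let N, K be positive integers, ε > 0, σ > 0, M > 0, and let Ω > 4εN. Consider on ℓ²(ℤ^N_K) the energy functional E_Ω[φ] = ε Σ_{ν=1}^N ‖∇ν⁺φ‖₂² − Ω Σ_{‖n‖_∞ ≤ K} |φ_n|². Then there exist φ̂ ∈ ℓ²(ℤ^N_K) with Σ_{‖n‖_∞ ≤ K} |φ̂_n|^{2σ+2} = M attaining inf { E_Ω[φ] : φ ∈ ℓ²(ℤ^N_K), Σ_{‖n‖_∞ ≤ K} |φ_n|^{2σ+2} = M }, and a real number β > 0, such that −ε(Δ_d φ̂)_n + β |φ̂_n|^{2σ} φ̂_n = Ω φ̂_n for all n with ‖n‖_∞ ≤ K (where φ̂_n = 0 for ‖n‖_∞ > K). Moreover the power R² = Σ_{‖n‖_∞ ≤ K} |φ̂_n|² satisfies [ (Ω − 4Nε)/(β(σ+1)) ]^{1/σ} ≤ R². -/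

import Mathlib

open scoped BigOperators
noncomputable section

/-- The lattice `ℤ^N`. -/
abbrev Zn (N : ℕ) := Fin N → ℤ

/-- The ν-th standard basis vector of `ℤ^N`. -/
def evec {N : ℕ} (ν : Fin N) : Zn N := fun i => if i = ν then 1 else 0

/-- The discrete Laplacian on `ℤ^N`. -/
def dLap {N : ℕ} (φ : Zn N → ℂ) : Zn N → ℂ :=
  fun n => ∑ ν : Fin N, (φ (n + evec ν) + φ (n - evec ν) - 2 * φ n)

/-- The forward difference operator in direction ν. -/
def fdiff {N : ℕ} (ν : Fin N) (φ : Zn N → ℂ) : Zn N → ℂ :=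
  fun n => φ (n + evec ν) - φ n

/-- `n` lies in the box `‖n‖_∞ ≤ K`. -/
def inBox {N : ℕ} (K : ℕ) (n : Zn N) : Prop := ∀ i, |n i| ≤ (K : ℤ)

/-- `φ` is supported in the box `‖n‖_∞ ≤ K` (i.e. `φ ∈ ℓ²(ℤ^N_K)`). -/
def suppIn {N : ℕ} (K : ℕ) (φ : Zn N → ℂ) : Prop := ∀ n, ¬ inBox K n → φ n = 0

/-- The linear energy functional `E_Ω[φ] = ε Σ_ν ‖∇ν⁺φ‖₂² − Ω Σ_n |φ_n|²`. -/
def EOmega {N : ℕ} (ε Ω : ℝ) (φ : Zn N → ℂ) : ℝ :=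
  ε * ∑ ν : Fin N, ∑' n, ‖fdiff ν φ n‖ ^ 2 - Ω * ∑' n, ‖φ n‖ ^ 2

namespace DNLSproof

open Finset Complex

variable {N K : ℕ}

def box (N K : ℕ) : Finset (Zn N) := Fintype.piFinset fun _ => Finset.Icc (-(K:ℤ)) (K:ℤ)

def box2 (N K : ℕ) : Finset (Zn N) := Fintype.piFinset fun _ => Finset.Icc (-((K:ℤ)+1)) ((K:ℤ)+1)

lemma mem_box {n : Zn N} : n ∈ box N K ↔ inBox K n := by
  simp [box, inBox, Finset.mem_Icc, abs_le, Fintype.mem_piFinset]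

lemma mem_box2 {n : Zn N} : n ∈ box2 N K ↔ ∀ i, |n i| ≤ (K:ℤ)+1 := by
  simp [box2, Finset.mem_Icc, abs_le, Fintype.mem_piFinset]

lemma evec_cases (ν : Fin N) (i : Fin N) : evec ν i = 0 ∨ evec ν i = 1 := by
  unfold evec; split <;> simp

lemma evec_ne_zero (ν : Fin N) : evec ν ≠ 0 := by
  intro h
  have := congrFun h ν
  simp [evec] at this

lemma mem_box2_of_mem_box {n : Zn N} (h : n ∈ box N K) : n ∈ box2 N K := by
  rw [mem_box] at h; rw [mem_box2]
  intro i; have := h i; rw [abs_le] at this ⊢; omega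

lemma add_evec_mem_box2 {n : Zn N} (ν : Fin N) (h : n ∈ box N K) : n + evec ν ∈ box2 N K := by
  rw [mem_box] at h; rw [mem_box2]
  intro i
  have h1 := h i
  have h2 := evec_cases ν i
  have : (n + evec ν) i = n i + evec ν i := rfl
  rw [this]
  rw [abs_le] at h1 ⊢
  rcases h2 with h2 | h2 <;> rw [h2] <;> constructor <;> omega

lemma sub_evec_mem_box2 {n : Zn N} (ν : Fin N) (h : n ∈ box N K) : n - evec ν ∈ box2 N K := by
  rw [mem_box] at h; rw [mem_box2]
  intro i
  have h1 := h i
  have h2 := evec_cases ν i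
  have : (n - evec ν) i = n i - evec ν i := rfl
  rw [this]
  rw [abs_le] at h1 ⊢
  rcases h2 with h2 | h2 <;> rw [h2] <;> constructor <;> omega

lemma fdiff_eq_zero_of_not_box2 {φ : Zn N → ℂ} (hφ : suppIn K φ) {ν : Fin N} {n : Zn N}
    (h : n ∉ box2 N K) : fdiff ν φ n = 0 := by
  rw [mem_box2] at h
  push_neg at h
  obtain ⟨i, hi⟩ := h
  rw [← not_le] at hi
  have h1 : ¬ inBox K n := by
    intro hb; have := hb i; rw [abs_le] at this hi; omega
  have h2 : ¬ inBox K (n + evec ν) := by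
    intro hb
    have hb1 := hb i
    have : (n + evec ν) i = n i + evec ν i := rfl
    rw [this] at hb1
    rw [abs_le] at hb1 hi
    rcases evec_cases ν i with h2 | h2 <;> rw [h2] at hb1 <;> omega
  unfold fdiff
  rw [hφ _ h1, hφ _ h2, sub_zero]

lemma phi_eq_zero_of_not_box {φ : Zn N → ℂ} (hφ : suppIn K φ) {n : Zn N}
    (h : n ∉ box N K) : φ n = 0 := hφ n (fun hb => h (mem_box.2 hb))


-- norm-rpow conversions
lemma norm_rpow_eq_normSq (z : ℂ) (σ : ℝ) :
    ‖z‖ ^ (2*σ+2) = Complex.normSq z ^ (σ+1) := by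
  rw [show (2*σ+2 : ℝ) = 2*(σ+1) by ring, Real.rpow_mul (norm_nonneg z),
    show ((2:ℝ)) = ((2:ℕ):ℝ) by norm_num, Real.rpow_natCast]
  congr 1
  rw [Complex.sq_norm]

lemma norm_rpow_eq_normSq' (z : ℂ) (σ : ℝ) :
    ‖z‖ ^ (2*σ) = Complex.normSq z ^ σ := by
  rw [show (2*σ : ℝ) = 2*σ by ring, Real.rpow_mul (norm_nonneg z),
    show ((2:ℝ)) = ((2:ℕ):ℝ) by norm_num, Real.rpow_natCast]
  congr 1
  rw [Complex.sq_norm]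

lemma norm_sq_eq_normSq (z : ℂ) : ‖z‖ ^ 2 = Complex.normSq z := by
  rw [Complex.sq_norm]

-- quadratic expansion of norm squared along a line
lemma normSq_line (a b : ℂ) (t : ℝ) :
    Complex.normSq (a + t • b)
      = Complex.normSq a + (2 * (a * (starRingEnd ℂ) b).re) * t + Complex.normSq b * t^2 := by
  simp only [Complex.real_smul, Complex.normSq_apply, Complex.add_re, Complex.add_im,
    Complex.mul_re, Complex.mul_im, Complex.ofReal_re, Complex.ofReal_im,
    Complex.conj_re, Complex.conj_im]
  ring

lemma norm_line (a b : ℂ) (t : ℝ) :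
    ‖a + t • b‖^2 = ‖a‖^2 + (2 * (a * (starRingEnd ℂ) b).re) * t + ‖b‖^2 * t^2 := by
  rw [norm_sq_eq_normSq, norm_sq_eq_normSq, norm_sq_eq_normSq, normSq_line]

lemma hasDerivAt_quadratic (a b c : ℝ) :
    HasDerivAt (fun t : ℝ => a + b*t + c*t^2) b 0 := by
  have h := ((hasDerivAt_id (0:ℝ)).const_mul b).const_add a
  have h2 := (hasDerivAt_pow 2 (0:ℝ)).const_mul c
  have h3 := h.add h2
  simp at h3
  exact h3


-- CHUNK C : finite energy functionals and their derivatives along lines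
variable (N K : ℕ) (ε σ Ω : ℝ)

def Fh (φ : Zn N → ℂ) : ℝ :=
  ε * ∑ ν : Fin N, ∑ n ∈ box2 N K, ‖fdiff ν φ n‖ ^ 2 - Ω * ∑ n ∈ box N K, ‖φ n‖ ^ 2

def fh (φ : Zn N → ℂ) : ℝ :=
  ∑ n ∈ box N K, Complex.normSq (φ n) ^ (σ + 1)

def GE (φ ρ : Zn N → ℂ) : ℝ :=
  ε * ∑ ν : Fin N, ∑ n ∈ box2 N K, (2 * (fdiff ν φ n * (starRingEnd ℂ) (fdiff ν ρ n)).re)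
    - Ω * ∑ n ∈ box N K, (2 * (φ n * (starRingEnd ℂ) (ρ n)).re)

def GF (φ ρ : Zn N → ℂ) : ℝ :=
  ∑ n ∈ box N K, (σ + 1) * Complex.normSq (φ n) ^ σ * (2 * (φ n * (starRingEnd ℂ) (ρ n)).re)

variable {N K}

lemma fdiff_line (ν : Fin N) (φ ρ : Zn N → ℂ) (t : ℝ) (n : Zn N) :
    fdiff ν (φ + t • ρ) n = fdiff ν φ n + t • fdiff ν ρ n := by
  simp only [fdiff, Pi.add_apply, Pi.smul_apply, Complex.real_smul]
  ring

lemma hasDerivAt_Fh (φ ρ : Zn N → ℂ) :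
    HasDerivAt (fun t : ℝ => Fh N K ε Ω (φ + t • ρ)) (GE N K ε Ω φ ρ) 0 := by
  have heq : (fun t : ℝ => Fh N K ε Ω (φ + t • ρ))
      = fun t : ℝ => Fh N K ε Ω φ + GE N K ε Ω φ ρ * t +
        (ε * ∑ ν : Fin N, ∑ n ∈ box2 N K, ‖fdiff ν ρ n‖ ^ 2
          - Ω * ∑ n ∈ box N K, ‖ρ n‖ ^ 2) * t^2 := by
    funext t
    simp only [Fh, GE, fdiff_line, Pi.add_apply, Pi.smul_apply, norm_line,
      Finset.sum_add_distrib, ← Finset.sum_mul]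
    ring
  rw [heq]
  exact hasDerivAt_quadratic _ _ _

lemma hasDerivAt_fh (hσ : 0 < σ) (φ ρ : Zn N → ℂ) :
    HasDerivAt (fun t : ℝ => fh N K σ (φ + t • ρ)) (GF N K σ φ ρ) 0 := by
  unfold fh GF
  apply HasDerivAt.fun_sum
  intro n _
  have hb : HasDerivAt (fun t : ℝ => Complex.normSq ((φ + t • ρ) n))
      (2 * (φ n * (starRingEnd ℂ) (ρ n)).re) 0 := by
    have heq : (fun t : ℝ => Complex.normSq ((φ + t • ρ) n))
        = fun t : ℝ => Complex.normSq (φ n) + (2 * (φ n * (starRingEnd ℂ) (ρ n)).re) * t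
          + Complex.normSq (ρ n) * t^2 := by
      funext t
      simp only [Pi.add_apply, Pi.smul_apply, normSq_line]
    rw [heq]
    exact hasDerivAt_quadratic _ _ _
  have h2 := hb.rpow_const (p := σ + 1) (Or.inr (by linarith))
  have : (σ + 1) * Complex.normSq (φ n) ^ σ * (2 * (φ n * (starRingEnd ℂ) (ρ n)).re)
      = (σ + 1) * Complex.normSq ((φ + (0:ℝ) • ρ) n) ^ (σ + 1 - 1) * (2 * (φ n * (starRingEnd ℂ) (ρ n)).re) := by
    simp
  rw [this]; exact h2.congr_deriv (by ring)


-- CHUNK D : scaling, extension, tsum transfer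
lemma Fh_smul (c : ℝ) (φ : Zn N → ℂ) :
    Fh N K ε Ω (c • φ) = c^2 * Fh N K ε Ω φ := by
  have h1 : ∀ ν n, ‖fdiff ν (c • φ) n‖^2 = c^2 * ‖fdiff ν φ n‖^2 := by
    intro ν n
    have : fdiff ν (c • φ) n = c • fdiff ν φ n := by
      simp only [fdiff, Pi.smul_apply, Complex.real_smul]; ring
    rw [this, norm_smul]
    simp [mul_pow]
  have h2 : ∀ n : Zn N, ‖(c • φ) n‖^2 = c^2 * ‖φ n‖^2 := by
    intro n
    simp only [Pi.smul_apply, norm_smul]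
    simp [mul_pow]
  simp only [Fh, h1, h2, ← Finset.mul_sum]
  ring

lemma fh_smul (hσ : 0 < σ) {c : ℝ} (hc : 0 ≤ c) (φ : Zn N → ℂ) :
    fh N K σ (c • φ) = c ^ (2*σ+2) * fh N K σ φ := by
  have h1 : ∀ n : Zn N, Complex.normSq ((c • φ) n) ^ (σ+1)
      = c ^ (2*σ+2) * Complex.normSq (φ n) ^ (σ+1) := by
    intro n
    have : Complex.normSq ((c • φ) n) = c^2 * Complex.normSq (φ n) := by
      simp only [Pi.smul_apply, Complex.real_smul, Complex.normSq_mul, Complex.normSq_ofReal]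
      ring
    rw [this, Real.mul_rpow (by positivity) (Complex.normSq_nonneg _)]
    congr 1
    rw [← Real.rpow_natCast c 2, ← Real.rpow_mul hc]
    norm_num
    ring_nf
  simp only [fh, h1, ← Finset.mul_sum]

lemma fh_nonneg (φ : Zn N → ℂ) : 0 ≤ fh N K σ φ :=
  Finset.sum_nonneg fun n _ => Real.rpow_nonneg (Complex.normSq_nonneg _) _

variable (N K) in
def ext0 (u : {n // n ∈ box N K} → ℂ) : Zn N → ℂ :=
  fun n => if h : n ∈ box N K then u ⟨n, h⟩ else 0

lemma suppIn_ext0 (u : {n // n ∈ box N K} → ℂ) : suppIn K (ext0 N K u) := by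
  intro n hn
  exact dif_neg (fun h => hn (mem_box.1 h))

lemma ext0_apply (u : {n // n ∈ box N K} → ℂ) {n : Zn N} (h : n ∈ box N K) :
    ext0 N K u n = u ⟨n, h⟩ := dif_pos h

lemma ext0_add_smul (u v : {n // n ∈ box N K} → ℂ) (t : ℝ) :
    ext0 N K (u + t • v) = ext0 N K u + t • ext0 N K v := by
  funext n
  by_cases h : n ∈ box N K <;> simp [ext0, h]

lemma ext0_smul (c : ℝ) (u : {n // n ∈ box N K} → ℂ) :
    ext0 N K (c • u) = c • ext0 N K u := by
  funext n
  by_cases h : n ∈ box N K <;> simp [ext0, h]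

lemma ext0_restrict {φ : Zn N → ℂ} (hφ : suppIn K φ) :
    ext0 N K (fun b => φ b.1) = φ := by
  funext n
  by_cases h : n ∈ box N K
  · simp [ext0, h]
  · simp only [ext0, dif_neg h]
    exact (phi_eq_zero_of_not_box hφ h).symm

lemma tsum_sq_eq {φ : Zn N → ℂ} (hφ : suppIn K φ) :
    ∑' n, ‖φ n‖ ^ 2 = ∑ n ∈ box N K, ‖φ n‖ ^ 2 :=
  tsum_eq_sum (fun n hn => by rw [phi_eq_zero_of_not_box hφ hn]; simp)

lemma tsum_fdiff_eq {φ : Zn N → ℂ} (hφ : suppIn K φ) (ν : Fin N) :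
    ∑' n, ‖fdiff ν φ n‖ ^ 2 = ∑ n ∈ box2 N K, ‖fdiff ν φ n‖ ^ 2 :=
  tsum_eq_sum (fun n hn => by rw [fdiff_eq_zero_of_not_box2 hφ hn]; simp)

lemma tsum_pow_eq (hσ : 0 < σ) {φ : Zn N → ℂ} (hφ : suppIn K φ) :
    ∑' n, ‖φ n‖ ^ (2*σ+2) = fh N K σ φ := by
  rw [show fh N K σ φ = ∑ n ∈ box N K, ‖φ n‖ ^ (2*σ+2) by
    unfold fh; exact Finset.sum_congr rfl fun n _ => (norm_rpow_eq_normSq _ _).symm]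
  exact tsum_eq_sum (fun n hn => by
    rw [phi_eq_zero_of_not_box hφ hn, norm_zero, Real.zero_rpow (by linarith)])

lemma EOmega_eq {φ : Zn N → ℂ} (hφ : suppIn K φ) :
    EOmega ε Ω φ = Fh N K ε Ω φ := by
  unfold EOmega Fh
  rw [tsum_sq_eq hφ]
  congr 2
  exact Finset.sum_congr rfl fun ν _ => tsum_fdiff_eq hφ ν

-- CHUNK E : compactness and existence of the minimizer
variable (N K) in
def VK := {n // n ∈ box N K} → ℂ

lemma cont_ext0_eval (n : Zn N) : Continuous fun u : {n // n ∈ box N K} → ℂ => ext0 N K u n := by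
  by_cases h : n ∈ box N K
  · simp only [ext0, dif_pos h]
    exact continuous_apply _
  · simp only [ext0, dif_neg h]
    exact continuous_const

lemma cont_Fhat : Continuous fun u : {n // n ∈ box N K} → ℂ => Fh N K ε Ω (ext0 N K u) := by
  apply Continuous.sub
  · apply Continuous.mul continuous_const
    apply continuous_finset_sum
    intro ν _
    apply continuous_finset_sum
    intro n _
    exact (((cont_ext0_eval (n + evec ν)).sub (cont_ext0_eval n)).norm).pow 2
  · apply Continuous.mul continuous_const
    apply continuous_finset_sum
    intro n _
    exact ((cont_ext0_eval n).norm).pow 2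

lemma cont_rpow_const (hσ : 0 < σ) : Continuous fun x : ℝ => x ^ (σ+1) :=
  continuous_iff_continuousAt.2 fun x => Real.continuousAt_rpow_const x _ (Or.inr (by linarith))

lemma cont_fhat (hσ : 0 < σ) : Continuous fun u : {n // n ∈ box N K} → ℂ => fh N K σ (ext0 N K u) := by
  apply continuous_finset_sum
  intro n _
  exact (cont_rpow_const σ hσ).comp (Complex.continuous_normSq.comp (cont_ext0_eval n))

lemma exists_min (hσ : 0 < σ) (M : ℝ) (hM : 0 < M)
    (hne : ∃ u : {n // n ∈ box N K} → ℂ, fh N K σ (ext0 N K u) = M) :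
    ∃ u : {n // n ∈ box N K} → ℂ, fh N K σ (ext0 N K u) = M ∧
      ∀ v : {n // n ∈ box N K} → ℂ, fh N K σ (ext0 N K v) = M →
        Fh N K ε Ω (ext0 N K u) ≤ Fh N K ε Ω (ext0 N K v) := by
  set S : Set ({n // n ∈ box N K} → ℂ) := {u | fh N K σ (ext0 N K u) = M} with hS
  have hclosed : IsClosed S := isClosed_eq (cont_fhat σ hσ) continuous_const
  have hbdd : Bornology.IsBounded S := by
    apply (Metric.isBounded_closedBall (x := (0 : {n // n ∈ box N K} → ℂ))
      (r := max 1 (M ^ (1/(σ+1))))).subset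
    intro u hu
    rw [Metric.mem_closedBall, dist_zero_right]
    apply pi_norm_le_iff_of_nonneg (le_max_of_le_left zero_le_one) |>.2
    intro b
    have hterm : Complex.normSq (u b) ^ (σ+1) ≤ M := by
      rw [← hu]
      have h0 := Finset.single_le_sum (f := fun n => Complex.normSq (ext0 N K u n) ^ (σ+1))
        (fun n _ => Real.rpow_nonneg (Complex.normSq_nonneg _) _) b.2
      rw [ext0_apply u b.2] at h0
      exact h0
    have hns : Complex.normSq (u b) ≤ M ^ (1/(σ+1)) := by
      have h1 : (Complex.normSq (u b) ^ (σ+1)) ^ (1/(σ+1)) ≤ M ^ (1/(σ+1)) :=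
        Real.rpow_le_rpow (Real.rpow_nonneg (Complex.normSq_nonneg _) _) hterm (by positivity)
      rwa [← Real.rpow_mul (Complex.normSq_nonneg _), mul_one_div,
        div_self (by positivity : σ+1 ≠ 0), Real.rpow_one] at h1
    have hn2 : ‖u b‖^2 ≤ M ^ (1/(σ+1)) := by rwa [norm_sq_eq_normSq]
    by_cases hb1 : ‖u b‖ ≤ 1
    · exact le_max_of_le_left hb1
    · push_neg at hb1
      apply le_max_of_le_right
      nlinarith [norm_nonneg (u b)]
  obtain ⟨u, hu, humin⟩ := (Metric.isCompact_of_isClosed_isBounded hclosed hbdd).exists_isMinOn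
    (Set.nonempty_of_mem hne.choose_spec) (cont_Fhat ε Ω).continuousOn
  exact ⟨u, hu, fun v hv => humin hv⟩

-- CHUNK F : the delta test function
lemma zero_mem_box : (0 : Zn N) ∈ box N K := by
  rw [mem_box]; intro i; simp

lemma zero_mem_box2 : (0 : Zn N) ∈ box2 N K := mem_box2_of_mem_box zero_mem_box

lemma neg_evec_mem_box2 (ν : Fin N) : -evec ν ∈ box2 N K := by
  rw [mem_box2]
  intro i
  have : (-evec ν) i = -(evec ν i) := rfl
  rw [this]
  rcases evec_cases ν i with h | h <;> rw [h] <;> simp <;> omega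

lemma delta_test (hσ : 0 < σ) (M : ℝ) (hM : 0 < M) (hε : 0 < ε) (hΩ : 2 * ε * N < Ω) :
    ∃ u : {n // n ∈ box N K} → ℂ, fh N K σ (ext0 N K u) = M ∧ Fh N K ε Ω (ext0 N K u) < 0 := by
  set a : ℝ := M ^ (1/(2*σ+2)) with ha_def
  have ha : 0 < a := Real.rpow_pos_of_pos hM _
  set δ : Zn N → ℂ := fun n => if n = 0 then (a:ℂ) else 0 with hδ_def
  have hsupp : suppIn K δ := by
    intro n hn
    have : n ≠ 0 := by
      intro h; exact hn (h ▸ mem_box.1 (zero_mem_box))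
    simp [hδ_def, this]
  refine ⟨fun b => δ b.1, ?_, ?_⟩ <;> rw [ext0_restrict hsupp]
  · unfold fh
    have hpt : ∀ n : Zn N, Complex.normSq (δ n) ^ (σ+1)
        = if n = 0 then (a*a) ^ (σ+1) else 0 := by
      intro n
      by_cases h : n = 0 <;>
        simp [hδ_def, h, Complex.normSq_ofReal, Real.zero_rpow (by linarith : σ+1 ≠ 0)]
    rw [Finset.sum_congr rfl fun n _ => hpt n, Finset.sum_ite_eq' _ _ _]
    rw [if_pos zero_mem_box]
    rw [show a * a = a ^ (2:ℕ) by ring, ← Real.rpow_natCast a 2,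
      ← Real.rpow_mul (le_of_lt ha), ha_def, ← Real.rpow_mul (le_of_lt hM)]
    norm_num
    rw [show ((2*σ+2)⁻¹ * (2*(σ+1)) : ℝ) = 1 by field_simp, Real.rpow_one]
  · unfold Fh
    have h2 : ∀ n : Zn N, ‖δ n‖^2 = if n = 0 then a^2 else 0 := by
      intro n
      by_cases h : n = 0 <;> simp [hδ_def, h, Complex.norm_real, Real.norm_eq_abs, abs_of_pos ha]
    have h1 : ∀ (ν : Fin N) (n : Zn N), ‖fdiff ν δ n‖^2
        = (if n = -evec ν then a^2 else 0) + (if n = 0 then a^2 else 0) := by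
      intro ν n
      have hene : evec ν ≠ 0 := evec_ne_zero ν
      unfold fdiff
      by_cases h : n = -evec ν
      · have h3 : n + evec ν = 0 := by rw [h]; abel
        have h4 : n ≠ 0 := by
          rw [h]; intro hc
          exact hene (by rw [← neg_neg (evec ν), hc, neg_zero])
        simp [hδ_def, h3, h4, h, hene, Complex.norm_real, Real.norm_eq_abs, abs_of_pos ha]
      · by_cases h0 : n = 0
        · have h3 : n + evec ν ≠ 0 := by
            rw [h0, zero_add]; exact hene
          simp [hδ_def, h3, h0, h, hene, Complex.norm_real, Real.norm_eq_abs, abs_of_pos ha]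
        · have h3 : n + evec ν ≠ 0 := by
            intro hc
            exact h (eq_neg_of_add_eq_zero_left hc)
          simp [hδ_def, h3, h0, h]
    have hsum1 : ∀ ν : Fin N, ∑ n ∈ box2 N K, ‖fdiff ν δ n‖^2 = a^2 + a^2 := by
      intro ν
      rw [Finset.sum_congr rfl fun n _ => h1 ν n, Finset.sum_add_distrib,
        Finset.sum_ite_eq' _ _ _, Finset.sum_ite_eq' _ _ _,
        if_pos (neg_evec_mem_box2 ν), if_pos zero_mem_box2]
    rw [Finset.sum_congr rfl fun ν _ => hsum1 ν,
      Finset.sum_congr rfl fun n _ => h2 n, Finset.sum_ite_eq' _ _ _,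
      if_pos zero_mem_box, Finset.sum_const, Finset.card_univ, Fintype.card_fin]
    have hh : (N : ℝ) * (2 * ε) * a^2 < Ω * a^2 := by nlinarith [pow_pos ha 2]
    simp only [nsmul_eq_mul]
    push_cast
    nlinarith [pow_pos ha 2]

-- CHUNK G : variational argument
lemma fh_zero (hσ : 0 < σ) : fh N K σ (0 : Zn N → ℂ) = 0 := by
  unfold fh
  apply Finset.sum_eq_zero
  intro n _
  simp [Real.zero_rpow (by linarith : σ+1 ≠ 0)]

lemma fh_pos (hσ : 0 < σ) (u : {n // n ∈ box N K} → ℂ) (hu : u ≠ 0) :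
    0 < fh N K σ (ext0 N K u) := by
  obtain ⟨b, hb⟩ := Function.ne_iff.1 hu
  apply Finset.sum_pos' (fun n _ => Real.rpow_nonneg (Complex.normSq_nonneg _) _)
  refine ⟨b.1, b.2, ?_⟩
  rw [ext0_apply u b.2]
  apply Real.rpow_pos_of_pos
  simpa [Complex.normSq_pos] using hb

lemma ratio_lower (hσ : 0 < σ) (M : ℝ) (hM : 0 < M)
    (Φ : Zn N → ℂ) (E₀ : ℝ) (hE₀ : E₀ = Fh N K ε Ω Φ)
    (hmin : ∀ v : {n // n ∈ box N K} → ℂ, fh N K σ (ext0 N K v) = M →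
      Fh N K ε Ω Φ ≤ Fh N K ε Ω (ext0 N K v))
    (ψ : {n // n ∈ box N K} → ℂ) (hψ : ψ ≠ 0) :
    E₀ * M ^ (-(1/(σ+1))) ≤ Fh N K ε Ω (ext0 N K ψ) * (fh N K σ (ext0 N K ψ)) ^ (-(1/(σ+1))) := by
  set fψ := fh N K σ (ext0 N K ψ) with hfψ
  have hfψpos : 0 < fψ := fh_pos σ hσ ψ hψ
  set c : ℝ := (M / fψ) ^ (1/(2*σ+2)) with hc_def
  have hc : 0 < c := Real.rpow_pos_of_pos (div_pos hM hfψpos) _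
  have hfw : fh N K σ (ext0 N K (c • ψ)) = M := by
    rw [ext0_smul, fh_smul σ hσ (le_of_lt hc), hc_def,
      ← Real.rpow_mul (le_of_lt (div_pos hM hfψpos)),
      show 1/(2*σ+2) * (2*σ+2) = 1 by field_simp,
      Real.rpow_one, ← hfψ, div_mul_cancel₀ _ (ne_of_gt hfψpos)]
  have hFw : Fh N K ε Ω (ext0 N K (c • ψ)) = c^2 * Fh N K ε Ω (ext0 N K ψ) := by
    rw [ext0_smul, Fh_smul]
  have h1 : E₀ ≤ c^2 * Fh N K ε Ω (ext0 N K ψ) := by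
    rw [hE₀, ← hFw]; exact hmin _ hfw
  have hkey : c^2 * M ^ (-(1/(σ+1))) = fψ ^ (-(1/(σ+1))) := by
    have hc2 : c^2 = M ^ (1/(σ+1)) * fψ ^ (-(1/(σ+1))) := by
      rw [hc_def, ← Real.rpow_natCast ((M / fψ) ^ (1/(2*σ+2))) 2,
        ← Real.rpow_mul (le_of_lt (div_pos hM hfψpos)),
        show 1/(2*σ+2) * ((2:ℕ):ℝ) = 1/(σ+1) by push_cast; field_simp,
        Real.div_rpow (le_of_lt hM) (le_of_lt hfψpos), Real.rpow_neg (le_of_lt hfψpos),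
        div_eq_mul_inv]
    rw [hc2, mul_comm (M ^ (1/(σ+1))) _, mul_assoc, ← Real.rpow_add hM]
    simp
  calc E₀ * M ^ (-(1/(σ+1)))
      ≤ (c^2 * Fh N K ε Ω (ext0 N K ψ)) * M ^ (-(1/(σ+1))) := by
        apply mul_le_mul_of_nonneg_right h1 (Real.rpow_nonneg (le_of_lt hM) _)
    _ = Fh N K ε Ω (ext0 N K ψ) * (c^2 * M ^ (-(1/(σ+1)))) := by ring
    _ = _ := by rw [hkey]

-- CHUNK H : Euler-Lagrange in weak (directional) form
lemma GE_eq_L_GF (hσ : 0 < σ) (M : ℝ) (hM : 0 < M)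
    (u : {n // n ∈ box N K} → ℂ) (hfu : fh N K σ (ext0 N K u) = M)
    (hmin : ∀ v : {n // n ∈ box N K} → ℂ, fh N K σ (ext0 N K v) = M →
      Fh N K ε Ω (ext0 N K u) ≤ Fh N K ε Ω (ext0 N K v))
    (v : {n // n ∈ box N K} → ℂ) :
    GE N K ε Ω (ext0 N K u) (ext0 N K v)
      = (Fh N K ε Ω (ext0 N K u) / ((σ+1) * M)) * GF N K σ (ext0 N K u) (ext0 N K v) := by
  set Φ := ext0 N K u with hΦ
  set ρ := ext0 N K v with hρ
  set E₀ := Fh N K ε Ω Φ with hE₀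
  set q : ℝ → ℝ := fun t => Fh N K ε Ω (Φ + t • ρ) * (fh N K σ (Φ + t • ρ)) ^ (-(1/(σ+1)))
    with hq_def
  have hzero : Φ + (0:ℝ) • ρ = Φ := by simp
  -- local minimum of q at 0
  have hlocmin : IsLocalMin q 0 := by
    have hcont : ContinuousAt (fun t : ℝ => fh N K σ (Φ + t • ρ)) 0 :=
      (hasDerivAt_fh σ hσ Φ ρ).continuousAt
    have hpos0 : (0:ℝ) < fh N K σ (Φ + (0:ℝ) • ρ) := by rw [hzero, hfu]; exact hM
    have hev : ∀ᶠ t in nhds (0:ℝ), 0 < fh N K σ (Φ + t • ρ) :=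
      hcont.eventually (eventually_gt_nhds hpos0)
    filter_upwards [hev] with t ht
    have hline : Φ + t • ρ = ext0 N K (u + t • v) := (ext0_add_smul u v t).symm
    have hne : u + t • v ≠ 0 := by
      intro h0
      rw [hline, h0] at ht
      have : ext0 N K (0 : {n // n ∈ box N K} → ℂ) = 0 := by
        funext n; by_cases h : n ∈ box N K <;> simp [ext0, h]
      rw [this, fh_zero σ hσ] at ht
      exact lt_irrefl _ ht
    have := ratio_lower ε σ Ω hσ M hM Φ E₀ hE₀ hmin (u + t • v) hne
    rw [← hline] at this
    have hq0 : q 0 = E₀ * M ^ (-(1/(σ+1))) := by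
      simp only [hq_def, hzero, hfu, hE₀]
    rw [hq0]
    exact this
  -- derivative of q at 0
  have hF := hasDerivAt_Fh (N:=N) (K:=K) ε Ω Φ ρ
  have hf := hasDerivAt_fh (N:=N) (K:=K) σ hσ Φ ρ
  have hfne : fh N K σ (Φ + (0:ℝ) • ρ) ≠ 0 := by rw [hzero, hfu]; exact ne_of_gt hM
  have hr := hf.rpow_const (p := -(1/(σ+1))) (Or.inl hfne)
  have hq := hF.mul hr
  have hD := hlocmin.hasDerivAt_eq_zero hq
  rw [hzero, hfu] at hD
  -- algebra
  set c' : ℝ := 1/(σ+1) with hc'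
  set P := M ^ (-c') with hP_def
  have hP : 0 < P := Real.rpow_pos_of_pos hM _
  have hM1 : M ^ (-c'-1) = P * M⁻¹ := by
    rw [hP_def, show -c'-1 = -c' + (-1) by ring, Real.rpow_add hM, Real.rpow_neg_one]
  rw [hM1] at hD
  have hgoal : GE N K ε Ω Φ ρ * P = (E₀ / ((σ+1) * M) * GF N K σ Φ ρ) * P := by
    have hσ1 : (σ:ℝ) + 1 ≠ 0 := by linarith
    have hMne : M ≠ 0 := ne_of_gt hM
    field_simp [hc'] at hD ⊢
    have hD' : GE N K ε Ω Φ ρ * M + -(Fh N K ε Ω Φ * GF N K σ Φ ρ * c') = 0 := by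
      have := hD; rw [mul_zero] at this; exact (mul_eq_zero.1 this).resolve_left (ne_of_gt hP)
    have hc'1 : c' * (σ+1) = 1 := by rw [hc']; field_simp
    linear_combination (σ+1) * hD' + (Fh N K ε Ω Φ * GF N K σ Φ ρ) * hc'1 - GF N K σ Φ ρ * hE₀
  exact mul_right_cancel₀ (ne_of_gt hP) hgoal

-- CHUNK I : pointwise Euler--Lagrange equation
def delta0 (n₀ : Zn N) (z : ℂ) : Zn N → ℂ := fun n => if n = n₀ then z else 0

lemma ext0_delta {n₀ : Zn N} (h : n₀ ∈ box N K) (z : ℂ) :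
    ext0 N K (fun b => if b.1 = n₀ then z else 0) = delta0 n₀ z := by
  funext n
  by_cases hn : n ∈ box N K
  · simp [ext0, hn, delta0]
  · have : n ≠ n₀ := fun hc => hn (hc ▸ h)
    simp [ext0, hn, delta0, this]

lemma GE_delta (Φ : Zn N → ℂ) {n₀ : Zn N} (h : n₀ ∈ box N K) (z : ℂ) :
    GE N K ε Ω Φ (delta0 n₀ z)
      = 2 * (((-(ε:ℂ)) * dLap Φ n₀ - (Ω:ℂ) * Φ n₀) * (starRingEnd ℂ) z).re := by
  unfold GE
  have hS2 : ∑ n ∈ box N K, (2 * (Φ n * (starRingEnd ℂ) (delta0 n₀ z n)).re)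
      = 2 * (Φ n₀ * (starRingEnd ℂ) z).re := by
    have hpt : ∀ n : Zn N, (2 * (Φ n * (starRingEnd ℂ) (delta0 n₀ z n)).re)
        = if n = n₀ then 2 * (Φ n * (starRingEnd ℂ) z).re else 0 := by
      intro n
      by_cases hn : n = n₀ <;> simp [delta0, hn]
    rw [Finset.sum_congr rfl fun n _ => hpt n, Finset.sum_ite_eq' _ _ _, if_pos h]
  have hS1 : ∀ ν : Fin N,
      ∑ n ∈ box2 N K, (2 * (fdiff ν Φ n * (starRingEnd ℂ) (fdiff ν (delta0 n₀ z) n)).re)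
      = 2 * ((fdiff ν Φ (n₀ - evec ν) - fdiff ν Φ n₀) * (starRingEnd ℂ) z).re := by
    intro ν
    have hne : n₀ - evec ν ≠ n₀ := by
      intro hc
      apply evec_ne_zero ν
      have := sub_eq_self.1 hc
      exact this
    have hpt : ∀ n : Zn N,
        (2 * (fdiff ν Φ n * (starRingEnd ℂ) (fdiff ν (delta0 n₀ z) n)).re)
        = (if n = n₀ - evec ν then 2 * (fdiff ν Φ n * (starRingEnd ℂ) z).re else 0)
          + (if n = n₀ then -(2 * (fdiff ν Φ n * (starRingEnd ℂ) z).re) else 0) := by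
      intro n
      have hdelta : fdiff ν (delta0 n₀ z) n
          = (if n + evec ν = n₀ then z else 0) - (if n = n₀ then z else 0) := rfl
      by_cases h1 : n = n₀ - evec ν
      · have h2 : n + evec ν = n₀ := by rw [h1]; abel
        have h3 : n ≠ n₀ := h1 ▸ hne
        rw [hdelta, if_pos h2, if_neg h3, if_pos h1, if_neg h3, sub_zero, add_zero]
      · by_cases h2 : n = n₀
        · have h3 : n + evec ν ≠ n₀ := by
            intro hc
            apply evec_ne_zero ν
            rw [h2] at hc
            simpa using hc
          rw [hdelta, if_neg h3, if_pos h2, if_neg h1, if_pos h2, zero_sub]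
          simp [map_neg, mul_neg, Complex.neg_re]
          ring
        · have h3 : n + evec ν ≠ n₀ := by
            intro hc
            exact h1 (by rw [← hc]; abel)
          rw [hdelta, if_neg h3, if_neg h2, if_neg h1, if_neg h2, sub_zero]
          simp
    rw [Finset.sum_congr rfl fun n _ => hpt n, Finset.sum_add_distrib,
      Finset.sum_ite_eq' _ _ _, Finset.sum_ite_eq' _ _ _,
      if_pos (sub_evec_mem_box2 ν h), if_pos (mem_box2_of_mem_box h)]
    simp only [Complex.sub_re, sub_mul, Complex.sub_re]
    ring
  rw [hS2, Finset.sum_congr rfl fun ν _ => hS1 ν]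
  have hsum : ∑ ν : Fin N, (2 * ((fdiff ν Φ (n₀ - evec ν) - fdiff ν Φ n₀) * (starRingEnd ℂ) z).re)
      = 2 * ((- dLap Φ n₀) * (starRingEnd ℂ) z).re := by
    rw [← Finset.mul_sum, ← Complex.re_sum, ← Finset.sum_mul]
    congr 3
    rw [dLap, ← Finset.sum_neg_distrib]
    apply Finset.sum_congr rfl
    intro ν _
    have hkey : fdiff ν Φ (n₀ - evec ν) = Φ n₀ - Φ (n₀ - evec ν) := by
      unfold fdiff
      congr 2
      abel
    rw [hkey]
    unfold fdiff
    ring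
  rw [hsum]
  simp only [sub_mul, Complex.sub_re, neg_mul, Complex.neg_re, mul_assoc,
    Complex.re_ofReal_mul]
  ring


-- CHUNK J : W = 0
lemma GF_delta (Φ : Zn N → ℂ) {n₀ : Zn N} (h : n₀ ∈ box N K) (z : ℂ) :
    GF N K σ Φ (delta0 n₀ z)
      = 2 * ((((σ+1) * Complex.normSq (Φ n₀) ^ σ : ℝ) : ℂ) * Φ n₀ * (starRingEnd ℂ) z).re := by
  unfold GF
  have hpt : ∀ n : Zn N, (σ + 1) * Complex.normSq (Φ n) ^ σ * (2 * (Φ n * (starRingEnd ℂ) (delta0 n₀ z n)).re)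
      = if n = n₀ then (σ + 1) * Complex.normSq (Φ n) ^ σ * (2 * (Φ n * (starRingEnd ℂ) z).re) else 0 := by
    intro n
    by_cases hn : n = n₀ <;> simp [delta0, hn]
  rw [Finset.sum_congr rfl fun n _ => hpt n, Finset.sum_ite_eq' _ _ _, if_pos h]
  have hassoc : ((((σ+1) * Complex.normSq (Φ n₀) ^ σ : ℝ)):ℂ) * Φ n₀ * (starRingEnd ℂ) z
      = ((((σ+1) * Complex.normSq (Φ n₀) ^ σ : ℝ)):ℂ) * (Φ n₀ * (starRingEnd ℂ) z) := by ring
  rw [hassoc, Complex.re_ofReal_mul]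
  ring

lemma EL_pointwise (hσ : 0 < σ) (M : ℝ) (hM : 0 < M)
    (u : {n // n ∈ box N K} → ℂ) (hfu : fh N K σ (ext0 N K u) = M)
    (hmin : ∀ v : {n // n ∈ box N K} → ℂ, fh N K σ (ext0 N K v) = M →
      Fh N K ε Ω (ext0 N K u) ≤ Fh N K ε Ω (ext0 N K v))
    {n₀ : Zn N} (h : n₀ ∈ box N K) :
    -(ε:ℂ) * dLap (ext0 N K u) n₀
      + ((-(Fh N K ε Ω (ext0 N K u)) / M : ℝ) : ℂ) * ((Complex.normSq (ext0 N K u n₀) ^ σ : ℝ) : ℂ) * ext0 N K u n₀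
      = (Ω:ℂ) * ext0 N K u n₀ := by
  set Φ := ext0 N K u with hΦ
  set E₀ := Fh N K ε Ω Φ with hE₀
  set L : ℝ := E₀ / ((σ+1) * M) with hL
  set W : ℂ := -(ε:ℂ) * dLap Φ n₀ - (Ω:ℂ) * Φ n₀
    - ((L * (σ+1) * Complex.normSq (Φ n₀) ^ σ : ℝ) : ℂ) * Φ n₀ with hW
  have hWz : ∀ z : ℂ, (W * (starRingEnd ℂ) z).re = 0 := by
    intro z
    have hGE := GE_eq_L_GF ε σ Ω hσ M hM u hfu hmin (fun b => if b.1 = n₀ then z else 0)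
    rw [ext0_delta h z, GE_delta ε Ω Φ h z, GF_delta σ Φ h z, ← hΦ, ← hE₀, ← hL] at hGE
    have expand : W * (starRingEnd ℂ) z
        = (-(ε:ℂ) * dLap Φ n₀ - (Ω:ℂ) * Φ n₀) * (starRingEnd ℂ) z
          - (L:ℂ) * ((((σ+1) * Complex.normSq (Φ n₀) ^ σ : ℝ)):ℂ) * Φ n₀ * (starRingEnd ℂ) z := by
      rw [hW]
      push_cast
      ring
    rw [expand, Complex.sub_re]
    have : ((L:ℂ) * ((((σ+1) * Complex.normSq (Φ n₀) ^ σ : ℝ)):ℂ) * Φ n₀ * (starRingEnd ℂ) z).re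
        = L * (((((σ+1) * Complex.normSq (Φ n₀) ^ σ : ℝ)):ℂ) * Φ n₀ * (starRingEnd ℂ) z).re := by
      rw [mul_assoc, mul_assoc, Complex.re_ofReal_mul, ← mul_assoc]
    rw [this]
    linarith [hGE]
  have hWre : W.re = 0 := by
    have := hWz 1
    simpa using this
  have hWim : W.im = 0 := by
    have := hWz Complex.I
    rw [Complex.conj_I] at this
    simp only [mul_neg, Complex.neg_re, Complex.mul_re, Complex.I_re, Complex.I_im] at this
    simpa using this
  have hW0 : W = 0 := Complex.ext hWre hWim
  have hLβ : (-(E₀) / M : ℝ) = -(L * (σ+1)) := by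
    rw [hL]
    field_simp
  rw [hLβ]
  have := hW
  rw [hW0] at this
  have hexp : ((L * (σ+1) * Complex.normSq (Φ n₀) ^ σ : ℝ) : ℂ)
      = ((L * (σ+1) : ℝ) : ℂ) * ((Complex.normSq (Φ n₀) ^ σ : ℝ) : ℂ) := by push_cast; ring
  rw [hexp] at this
  push_cast at this ⊢
  linear_combination -this

-- CHUNK K : bounds for the power estimate
lemma cross_bound (w v : ℂ) :
    -((w * (starRingEnd ℂ) v).re) ≤ (Complex.normSq w + Complex.normSq v) / 2 := by
  have h1 : -((w * (starRingEnd ℂ) v).re) ≤ ‖w * (starRingEnd ℂ) v‖ := by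
    calc -((w * (starRingEnd ℂ) v).re) ≤ |(w * (starRingEnd ℂ) v).re| := neg_le_abs _
    _ ≤ ‖w * (starRingEnd ℂ) v‖ := Complex.abs_re_le_norm _
  have h2 : ‖w * (starRingEnd ℂ) v‖ = ‖w‖ * ‖v‖ := by
    rw [norm_mul, Complex.norm_conj]
  have h3 : ‖w‖ * ‖v‖ ≤ (Complex.normSq w + Complex.normSq v) / 2 := by
    have := sq_nonneg (‖w‖ - ‖v‖)
    have e1 : ‖w‖ ^ 2 = Complex.normSq w := Complex.sq_norm w
    have e2 : ‖v‖ ^ 2 = Complex.normSq v := Complex.sq_norm v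
    nlinarith
  linarith [h1, h2 ▸ h1]

lemma sum_shift_le {Φ : Zn N → ℂ} (hΦ : suppIn K Φ) (a : Zn N) :
    ∑ n ∈ box N K, Complex.normSq (Φ (n + a)) ≤ ∑ n ∈ box N K, Complex.normSq (Φ n) := by
  have hinj : Set.InjOn (fun n : Zn N => n + a) (box N K) := fun x _ y _ h => by
    simpa using congrArg (fun m : Zn N => m - a) h
  rw [show ∑ n ∈ box N K, Complex.normSq (Φ (n + a))
      = ∑ m ∈ (box N K).image (fun n => n + a), Complex.normSq (Φ m) by
    rw [Finset.sum_image hinj]]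
  have hsub : ∑ m ∈ (box N K).image (fun n => n + a), Complex.normSq (Φ m)
      = ∑ m ∈ ((box N K).image (fun n => n + a)) ∩ box N K, Complex.normSq (Φ m) := by
    symm
    apply Finset.sum_subset (Finset.inter_subset_left)
    intro m hm hm2
    have : m ∉ box N K := by
      intro hc
      exact hm2 (Finset.mem_inter.2 ⟨hm, hc⟩)
    rw [phi_eq_zero_of_not_box hΦ this, Complex.normSq_zero]
  rw [hsub]
  apply Finset.sum_le_sum_of_subset_of_nonneg (Finset.inter_subset_right)
  intro n _ _
  exact Complex.normSq_nonneg _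

lemma lap_pt (w a b : ℂ) :
    ((2*w - a - b) * (starRingEnd ℂ) w).re
      = 2 * Complex.normSq w - (a * (starRingEnd ℂ) w).re - (b * (starRingEnd ℂ) w).re := by
  simp only [Complex.mul_re, Complex.sub_re, Complex.sub_im, Complex.conj_re, Complex.conj_im,
    Complex.normSq_apply, Complex.mul_im, Complex.re_ofNat, Complex.im_ofNat]
  ring

lemma green_bound {Φ : Zn N → ℂ} (hΦ : suppIn K Φ) :
    ∑ n ∈ box N K, ((-(dLap Φ n)) * (starRingEnd ℂ) (Φ n)).re
      ≤ 4 * N * ∑ n ∈ box N K, Complex.normSq (Φ n) := by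
  set S := ∑ n ∈ box N K, Complex.normSq (Φ n) with hS
  have hstep : ∀ n : Zn N, ((-(dLap Φ n)) * (starRingEnd ℂ) (Φ n)).re
      = ∑ ν : Fin N, ((2 * Φ n - Φ (n + evec ν) - Φ (n - evec ν)) * (starRingEnd ℂ) (Φ n)).re := by
    intro n
    rw [← Complex.re_sum, ← Finset.sum_mul]
    congr 2
    rw [dLap, ← Finset.sum_neg_distrib]
    apply Finset.sum_congr rfl
    intro ν _
    ring
  rw [Finset.sum_congr rfl fun n _ => hstep n, Finset.sum_comm]
  have hν : ∀ ν : Fin N,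
      ∑ n ∈ box N K, ((2 * Φ n - Φ (n + evec ν) - Φ (n - evec ν)) * (starRingEnd ℂ) (Φ n)).re
        ≤ 4 * S := by
    intro ν
    have hpt : ∀ n ∈ box N K,
        ((2 * Φ n - Φ (n + evec ν) - Φ (n - evec ν)) * (starRingEnd ℂ) (Φ n)).re
        ≤ 2 * Complex.normSq (Φ n)
          + (Complex.normSq (Φ (n + evec ν)) + Complex.normSq (Φ n)) / 2
          + (Complex.normSq (Φ (n - evec ν)) + Complex.normSq (Φ n)) / 2 := by
      intro n _
      rw [lap_pt]
      have h1 := cross_bound (Φ (n + evec ν)) (Φ n)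
      have h2 := cross_bound (Φ (n - evec ν)) (Φ n)
      linarith
    calc ∑ n ∈ box N K, ((2 * Φ n - Φ (n + evec ν) - Φ (n - evec ν)) * (starRingEnd ℂ) (Φ n)).re
        ≤ ∑ n ∈ box N K, (2 * Complex.normSq (Φ n)
          + (Complex.normSq (Φ (n + evec ν)) + Complex.normSq (Φ n)) / 2
          + (Complex.normSq (Φ (n - evec ν)) + Complex.normSq (Φ n)) / 2) :=
          Finset.sum_le_sum hpt
      _ = 2 * S + (∑ n ∈ box N K, Complex.normSq (Φ (n + evec ν)) + S) / 2
          + (∑ n ∈ box N K, Complex.normSq (Φ (n - evec ν)) + S) / 2 := by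
          rw [Finset.sum_add_distrib, Finset.sum_add_distrib, ← Finset.mul_sum, ← hS,
            ← Finset.sum_div, ← Finset.sum_div, Finset.sum_add_distrib,
            Finset.sum_add_distrib, ← hS]
      _ ≤ 4 * S := by
          have ha := sum_shift_le hΦ (evec ν)
          have hb := sum_shift_le hΦ (-(evec ν))
          simp only [sub_eq_add_neg]
          rw [hS]
          linarith [ha, hb]
  calc ∑ ν : Fin N, ∑ n ∈ box N K, ((2 * Φ n - Φ (n + evec ν) - Φ (n - evec ν)) * (starRingEnd ℂ) (Φ n)).re
      ≤ ∑ ν : Fin N, 4 * S := Finset.sum_le_sum fun ν _ => hν ν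
    _ = 4 * N * S := by
      rw [Finset.sum_const, Finset.card_univ, Fintype.card_fin, nsmul_eq_mul]
      ring

lemma rpow_mul_self {x : ℝ} (hx : 0 ≤ x) (σ : ℝ) (hσ : 0 < σ) : x ^ σ * x = x ^ (σ + 1) := by
  rcases eq_or_lt_of_le hx with h | h
  · rw [← h, Real.zero_rpow (by linarith : σ ≠ 0), Real.zero_rpow (by linarith : σ + 1 ≠ 0),
      zero_mul]
  · rw [Real.rpow_add_one (ne_of_gt h)]

end DNLSproof

open DNLSproof Finset

/-- Constrained minimization of the linear energy for the defocusing DNLS with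
power nonlinearity: for `Ω > 4εN` there is a minimizer of `E_Ω` subject to
`Σ |φ_n|^{2σ+2} = M`, with a multiplier `β > 0`, and its power satisfies the
lower bound `[(Ω − 4Nε)/(β(σ+1))]^{1/σ} ≤ R²`. -/
theorem exists_minimizer_EOmega_power {N K : ℕ} (hN : 0 < N) (hK : 0 < K)
    (ε σ M Ω : ℝ) (hε : 0 < ε) (hσ : 0 < σ) (hM : 0 < M)
    (hΩ : 4 * ε * N < Ω) :
    ∃ (φ : Zn N → ℂ) (β : ℝ),
      suppIn K φ ∧
      (∑' n, ‖φ n‖ ^ (2 * σ + 2)) = M ∧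
      (∀ ψ : Zn N → ℂ, suppIn K ψ → (∑' n, ‖ψ n‖ ^ (2 * σ + 2)) = M →
        EOmega ε Ω φ ≤ EOmega ε Ω ψ) ∧
      0 < β ∧
      (∀ n : Zn N, inBox K n →
        -(ε : ℂ) * dLap φ n + (β : ℂ) * ((‖φ n‖ ^ (2 * σ) : ℝ) : ℂ) * φ n
          = (Ω : ℂ) * φ n) ∧
      ((Ω - 4 * N * ε) / (β * (σ + 1))) ^ (1 / σ) ≤ ∑' n, ‖φ n‖ ^ 2 := by
  classical
  have hNn : (0:ℝ) ≤ (N:ℝ) := Nat.cast_nonneg N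
  have hΩ2 : 2 * ε * N < Ω := by nlinarith
  obtain ⟨u0, hu0f, hu0F⟩ := delta_test (N:=N) (K:=K) ε σ Ω hσ M hM hε hΩ2
  obtain ⟨u, hfu, hmin⟩ := exists_min ε σ Ω hσ M hM ⟨u0, hu0f⟩
  set Φ := ext0 N K u with hΦdef
  set E₀ := Fh N K ε Ω Φ with hE₀def
  set β := -E₀ / M with hβdef
  have hsupp : suppIn K Φ := suppIn_ext0 u
  have hE₀neg : E₀ < 0 := lt_of_le_of_lt (hmin u0 hu0f) hu0F
  have hβpos : 0 < β := by
    rw [hβdef]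
    apply div_pos (by linarith) hM
  -- the Euler--Lagrange equation, in normSq form
  have hEL : ∀ n : Zn N, n ∈ box N K →
      -(ε : ℂ) * dLap Φ n + (β : ℂ) * ((Complex.normSq (Φ n) ^ σ : ℝ) : ℂ) * Φ n
        = (Ω : ℂ) * Φ n := by
    intro n hn
    have h := EL_pointwise ε σ Ω hσ M hM u hfu hmin hn
    rw [hβdef, hE₀def]
    exact h
  -- power sum
  set S := ∑ n ∈ box N K, Complex.normSq (Φ n) with hSdef
  have htsumS : ∑' n, ‖Φ n‖ ^ 2 = S := by
    rw [tsum_sq_eq hsupp]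
    exact Finset.sum_congr rfl fun n _ => norm_sq_eq_normSq _
  have hSpos : 0 < S := by
    rcases lt_or_eq_of_le (Finset.sum_nonneg fun n _ => Complex.normSq_nonneg (Φ n)) with h | h
    · exact h
    · exfalso
      have hzero : ∀ n ∈ box N K, Complex.normSq (Φ n) = 0 := by
        intro n hn
        have := (Finset.sum_eq_zero_iff_of_nonneg
          (fun n _ => Complex.normSq_nonneg (Φ n))).1 h.symm
        exact this n hn
      have : fh N K σ Φ = 0 := by
        apply Finset.sum_eq_zero
        intro n hn
        rw [hzero n hn, Real.zero_rpow (by linarith : σ + 1 ≠ 0)]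
      rw [hfu] at this
      linarith
  -- summed EL identity
  have hELsum : ∀ n ∈ box N K,
      ε * ((-(dLap Φ n)) * (starRingEnd ℂ) (Φ n)).re
        + β * (Complex.normSq (Φ n) ^ σ * Complex.normSq (Φ n)) = Ω * Complex.normSq (Φ n) := by
    intro n hn
    have h := hEL n hn
    have h2 : (ε:ℂ) * ((-(dLap Φ n)) * (starRingEnd ℂ) (Φ n))
        + (β:ℂ) * (((Complex.normSq (Φ n) ^ σ : ℝ):ℂ) * ((Complex.normSq (Φ n) : ℝ):ℂ))
        = (Ω:ℂ) * ((Complex.normSq (Φ n) : ℝ):ℂ) := by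
      have hc := Complex.mul_conj (Φ n)
      linear_combination (starRingEnd ℂ) (Φ n) * h
        + ((Ω:ℂ) - (β:ℂ) * ((Complex.normSq (Φ n) ^ σ : ℝ):ℂ)) * hc
    have h3 := congrArg Complex.re h2
    simp only [Complex.mul_re, Complex.neg_re, Complex.neg_im, Complex.conj_re,
      Complex.conj_im, Complex.re_ofReal_mul, Complex.add_re, Complex.ofReal_mul,
      Complex.ofReal_re, Complex.ofReal_im] at h3 ⊢
    linarith [h3]
  have hgreen' : ε * (∑ n ∈ box N K, ((-(dLap Φ n)) * (starRingEnd ℂ) (Φ n)).re) + β * M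
      = Ω * S := by
    have hsum := Finset.sum_congr rfl hELsum
    rw [Finset.sum_add_distrib, ← Finset.mul_sum, ← Finset.mul_sum, ← Finset.mul_sum] at hsum
    have hrw : ∑ n ∈ box N K, Complex.normSq (Φ n) ^ σ * Complex.normSq (Φ n) = M := by
      rw [← hfu]
      apply Finset.sum_congr rfl
      intro n _
      exact rpow_mul_self (Complex.normSq_nonneg _) σ hσ
    rw [hrw] at hsum
    exact hsum
  have hT : ∑ n ∈ box N K, ((-(dLap Φ n)) * (starRingEnd ℂ) (Φ n)).re ≤ 4 * N * S :=
    green_bound hsupp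
  have hkey1 : (Ω - 4 * N * ε) * S ≤ β * M := by nlinarith
  have hMS : M ≤ S ^ (σ + 1) := by
    rw [← hfu]
    calc fh N K σ Φ = ∑ n ∈ box N K, Complex.normSq (Φ n) ^ σ * Complex.normSq (Φ n) := by
          apply Finset.sum_congr rfl
          intro n _
          exact (rpow_mul_self (Complex.normSq_nonneg _) σ hσ).symm
      _ ≤ ∑ n ∈ box N K, S ^ σ * Complex.normSq (Φ n) := by
          apply Finset.sum_le_sum
          intro n hn
          apply mul_le_mul_of_nonneg_right _ (Complex.normSq_nonneg _)
          apply Real.rpow_le_rpow (Complex.normSq_nonneg _) _ (le_of_lt hσ)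
          exact Finset.single_le_sum (fun m _ => Complex.normSq_nonneg (Φ m)) hn
      _ = S ^ σ * S := by rw [← Finset.mul_sum]
      _ = S ^ (σ + 1) := rpow_mul_self (le_of_lt hSpos) σ hσ
  have hΩ4 : 0 < Ω - 4 * N * ε := by nlinarith
  have hkey2 : (Ω - 4 * N * ε) / β ≤ S ^ σ := by
    rw [div_le_iff₀ hβpos]
    have h1 : (Ω - 4 * N * ε) * S ≤ β * (S ^ σ * S) := by
      calc (Ω - 4 * N * ε) * S ≤ β * M := hkey1
        _ ≤ β * S ^ (σ + 1) := by
            apply mul_le_mul_of_nonneg_left hMS (le_of_lt hβpos)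
        _ = β * (S ^ σ * S) := by rw [rpow_mul_self (le_of_lt hSpos) σ hσ]
    have := (mul_le_mul_iff_of_pos_right hSpos).1 (by linarith [h1] : (Ω - 4 * N * ε) * S ≤ (β * S ^ σ) * S)
    linarith
  have hkey3 : (Ω - 4 * N * ε) / (β * (σ + 1)) ≤ S ^ σ := by
    apply le_trans _ hkey2
    apply div_le_div_of_nonneg_left (le_of_lt hΩ4) hβpos
    nlinarith
  refine ⟨Φ, β, hsupp, ?_, ?_, hβpos, ?_, ?_⟩
  · rw [tsum_pow_eq σ hσ hsupp, hfu]
  · intro ψ hψ hψM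
    rw [EOmega_eq ε Ω hsupp, EOmega_eq ε Ω hψ]
    have hext : ext0 N K (fun b => ψ b.1) = ψ := ext0_restrict hψ
    have hfψ : fh N K σ (ext0 N K (fun b => ψ b.1)) = M := by
      rw [hext, ← tsum_pow_eq σ hσ hψ, hψM]
    have := hmin (fun b => ψ b.1) hfψ
    rwa [hext] at this
  · intro n hn
    have h := hEL n (mem_box.2 hn)
    rwa [← norm_rpow_eq_normSq' (Φ n) σ] at h
  · rw [htsumS]
    calc ((Ω - 4 * N * ε) / (β * (σ + 1))) ^ (1 / σ)
        ≤ (S ^ σ) ^ (1 / σ) := by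
          apply Real.rpow_le_rpow _ hkey3 (by positivity)
          positivity
      _ = S := by
          rw [← Real.rpow_mul (le_of_lt hSpos), mul_one_div, div_self (ne_of_gt hσ),
            Real.rpow_one]
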